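/- arXiv:2310.15870 — 9 statements merged into one kernel-verified Lean document; each statement's English description precedes it below -/
import Mathlib

section
/- For pure advection (β = 0), assume s₋ + s₊ ≠ 0 and let û be the unique solution of the transmission condition F̂₋(û) + F̂₊(û) = 0. Then, with a = α·n₋, the common normal flux seen from the '−' side satisfies F̂₋(û) = ((a·s₋ + s₊s₋)/(s₋+s₊))·u₋ + ((a·s₊ − s₊s₋)/(s₋+s₊))·u₊, and F̂₊(û) = −F̂₋(û). -/
open RealInnerProductSpace

/- With `β = 0` the transmission condition is linear in the trace, `(s₋ + s₊) û = s₋ u₋ + s₊ u₊`,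
so `û` is the stabilization-weighted average of `u₋` and `u₊`; substituting it into
`F̂₋(û) = a û + s₋ (u₋ - û)` gives the stated flux, and `F̂₊ = -F̂₋` is the transmission
condition itself. -/

theorem trace_eq_of_transmission {a sm sp um up uhat : ℝ} (hs : sm + sp ≠ 0)
    (htrans : (a * uhat + sm * (um - uhat)) + (-a * uhat + sp * (up - uhat)) = 0) :
    uhat = (sm * um + sp * up) / (sm + sp) := by
  rw [eq_div_iff hs]
  linarith

theorem flux_eq_of_transmission {a sm sp um up uhat : ℝ} (hs : sm + sp ≠ 0)
    (htrans : (a * uhat + sm * (um - uhat)) + (-a * uhat + sp * (up - uhat)) = 0) :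
    a * uhat + sm * (um - uhat)
      = ((a * sm + sp * sm) / (sm + sp)) * um + ((a * sp - sp * sm) / (sm + sp)) * up := by
  rw [trace_eq_of_transmission hs htrans]
  field_simp
  ring

theorem stmt_2_general (d : ℕ)
    (nm : EuclideanSpace ℝ (Fin d))
    (α : EuclideanSpace ℝ (Fin d)) (β : ℝ) (hβ : β = 0)
    (um up : ℝ) (qm qp : EuclideanSpace ℝ (Fin d)) (sm sp : ℝ)
    (hs : sm + sp ≠ 0) (uhat : ℝ)
    (htrans :
      (⟪α, nm⟫ * uhat - β * ⟪qm, nm⟫ + sm * (um - uhat)) +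
      (⟪α, -nm⟫ * uhat - β * ⟪qp, -nm⟫ + sp * (up - uhat)) = 0) :
    (⟪α, nm⟫ * uhat - β * ⟪qm, nm⟫ + sm * (um - uhat))
      = ((⟪α, nm⟫ * sm + sp * sm) / (sm + sp)) * um
        + ((⟪α, nm⟫ * sp - sp * sm) / (sm + sp)) * up
    ∧ (⟪α, -nm⟫ * uhat - β * ⟪qp, -nm⟫ + sp * (up - uhat))
      = -(⟪α, nm⟫ * uhat - β * ⟪qm, nm⟫ + sm * (um - uhat)) := by
  subst hβ
  simp only [inner_neg_right, zero_mul, sub_zero] at htrans ⊢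
  exact ⟨flux_eq_of_transmission hs htrans, by linarith⟩

/-- Pure advection (`β = 0`): with `s₋ + s₊ ≠ 0` and `uhat` the solution of the
transmission condition, the common normal flux from the `−` side is
`((a s₋ + s₊ s₋)/(s₋+s₊)) u₋ + ((a s₊ − s₊ s₋)/(s₋+s₊)) u₊`, and
`F̂₊(uhat) = −F̂₋(uhat)`. -/
theorem stmt_2 (d : ℕ) (hd : 1 ≤ d)
    (nm : EuclideanSpace ℝ (Fin d)) (hn : ‖nm‖ = 1)
    (α : EuclideanSpace ℝ (Fin d)) (β : ℝ) (hβ : β = 0)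
    (um up : ℝ) (qm qp : EuclideanSpace ℝ (Fin d)) (sm sp : ℝ)
    (hs : sm + sp ≠ 0) (uhat : ℝ)
    (htrans :
      (⟪α, nm⟫ * uhat - β * ⟪qm, nm⟫ + sm * (um - uhat)) +
      (⟪α, -nm⟫ * uhat - β * ⟪qp, -nm⟫ + sp * (up - uhat)) = 0) :
    (⟪α, nm⟫ * uhat - β * ⟪qm, nm⟫ + sm * (um - uhat))
      = ((⟪α, nm⟫ * sm + sp * sm) / (sm + sp)) * um
        + ((⟪α, nm⟫ * sp - sp * sm) / (sm + sp)) * up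
    ∧ (⟪α, -nm⟫ * uhat - β * ⟪qp, -nm⟫ + sp * (up - uhat))
      = -(⟪α, nm⟫ * uhat - β * ⟪qm, nm⟫ + sm * (um - uhat)) :=
  stmt_2_general d nm α β hβ um up qm qp sm sp hs uhat htrans
end

section
/- For pure advection (β = 0) with equal nonzero stabilization on both sides, s₋ = s₊ = s ≠ 0, the unique û solving the transmission condition F̂₋(û) + F̂₊(û) = 0 satisfies u₋ − û = û − u₊ (equivalently û = (u₋ + u₊)/2), which is the relationship between the trace variable and the interface solution in standard FR schemes. -/
open RealInnerProductSpace

theorem stmt_3_general (d : ℕ)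
    (nm : EuclideanSpace ℝ (Fin d))
    (α : EuclideanSpace ℝ (Fin d)) (β : ℝ) (hβ : β = 0)
    (um up : ℝ) (qm qp : EuclideanSpace ℝ (Fin d)) (s : ℝ) (hs : s ≠ 0)
    (uhat : ℝ)
    (htrans :
      (⟪α, nm⟫ * uhat - β * ⟪qm, nm⟫ + s * (um - uhat)) +
      (⟪α, -nm⟫ * uhat - β * ⟪qp, -nm⟫ + s * (up - uhat)) = 0) :
    um - uhat = uhat - up ∧ uhat = (um + up) / 2 := by
  subst hβ
  rw [inner_neg_right] at htrans
  have hstab : s * ((um - uhat) - (uhat - up)) = 0 := by linarith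
  have hjump : um - uhat = uhat - up :=
    sub_eq_zero.mp ((mul_eq_zero.mp hstab).resolve_left hs)
  exact ⟨hjump, by linarith⟩

/-- Pure advection (`β = 0`) with equal nonzero stabilization `s₋ = s₊ = s ≠ 0`:
the unique solution `uhat` of the transmission condition satisfies
`u₋ − uhat = uhat − u₊`, equivalently `uhat = (u₋ + u₊)/2`. -/
theorem stmt_3 (d : ℕ) (hd : 1 ≤ d)
    (nm : EuclideanSpace ℝ (Fin d)) (hn : ‖nm‖ = 1)
    (α : EuclideanSpace ℝ (Fin d)) (β : ℝ) (hβ : β = 0)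
    (um up : ℝ) (qm qp : EuclideanSpace ℝ (Fin d)) (s : ℝ) (hs : s ≠ 0)
    (uhat : ℝ)
    (htrans :
      (⟪α, nm⟫ * uhat - β * ⟪qm, nm⟫ + s * (um - uhat)) +
      (⟪α, -nm⟫ * uhat - β * ⟪qp, -nm⟫ + s * (up - uhat)) = 0) :
    um - uhat = uhat - up ∧ uhat = (um + up) / 2 :=
  stmt_3_general d nm α β hβ um up qm qp s hs uhat htrans
end

section
/- If the stabilization parameters satisfy s₋ ≥ (α·n₋)/2 and s₊ ≥ (α·n₊)/2, then for every û ∈ ℝ the pointwise face-energy contribution is nonpositive: −u₋·F̂₋(û) − u₊·F̂₊(û) + (1/2)((α·n₋)u₋² + (α·n₊)u₊²) − (û − u₋)(−β q₋·n₋) − (û − u₊)(−β q₊·n₊) + û·F̂₋(û) + û·F̂₊(û) ≤ 0. This is the face-level nonpositivity underlying the energy stability theorem for hybridized FR methods for linear advection–diffusion. -/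
/-!
On each side of the face, with `a = α·n`, the contribution is `(a/2 - s)(û - u)² + (a/2)û²`;
the first term is nonpositive under the stabilization condition, and the `(a/2)û²` terms of the
two sides cancel because `n₊ = -n₋`.
-/

open RealInnerProductSpace

theorem face_energy_side_eq (a g s u uhat : ℝ) :
    (uhat - u) * (a * uhat - g + s * (u - uhat)) + a / 2 * u ^ 2 + (uhat - u) * g
      = (a / 2 - s) * (uhat - u) ^ 2 + a / 2 * uhat ^ 2 := by
  ring

theorem face_energy_side_le {a s : ℝ} (hs : a / 2 ≤ s) (g u uhat : ℝ) :
    (uhat - u) * (a * uhat - g + s * (u - uhat)) + a / 2 * u ^ 2 + (uhat - u) * g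
      ≤ a / 2 * uhat ^ 2 := by
  rw [face_energy_side_eq]
  nlinarith [mul_nonneg (sub_nonneg.2 hs) (sq_nonneg (uhat - u))]

theorem stmt_5_general (d : ℕ)
    (nm : EuclideanSpace ℝ (Fin d))
    (α : EuclideanSpace ℝ (Fin d)) (β : ℝ)
    (um up : ℝ) (qm qp : EuclideanSpace ℝ (Fin d)) (sm sp : ℝ)
    (hsm : sm ≥ ⟪α, nm⟫ / 2) (hsp : sp ≥ ⟪α, -nm⟫ / 2) :
    ∀ uhat : ℝ,
      -um * (⟪α, nm⟫ * uhat - β * ⟪qm, nm⟫ + sm * (um - uhat))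
      - up * (⟪α, -nm⟫ * uhat - β * ⟪qp, -nm⟫ + sp * (up - uhat))
      + (1 / 2) * (⟪α, nm⟫ * um ^ 2 + ⟪α, -nm⟫ * up ^ 2)
      - (uhat - um) * (-β * ⟪qm, nm⟫)
      - (uhat - up) * (-β * ⟪qp, -nm⟫)
      + uhat * (⟪α, nm⟫ * uhat - β * ⟪qm, nm⟫ + sm * (um - uhat))
      + uhat * (⟪α, -nm⟫ * uhat - β * ⟪qp, -nm⟫ + sp * (up - uhat))
      ≤ 0 := by
  intro uhat
  have hminus := face_energy_side_le hsm (β * ⟪qm, nm⟫) um uhat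
  have hplus := face_energy_side_le hsp (β * ⟪qp, -nm⟫) up uhat
  rw [inner_neg_right] at hplus ⊢
  linear_combination hminus + hplus

/-- If `s₋ ≥ (α·n₋)/2` and `s₊ ≥ (α·n₊)/2`, then for every `uhat` the pointwise
face-energy contribution is nonpositive. -/
theorem stmt_5 (d : ℕ) (hd : 1 ≤ d)
    (nm : EuclideanSpace ℝ (Fin d)) (hn : ‖nm‖ = 1)
    (α : EuclideanSpace ℝ (Fin d)) (β : ℝ)
    (um up : ℝ) (qm qp : EuclideanSpace ℝ (Fin d)) (sm sp : ℝ)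
    (hsm : sm ≥ ⟪α, nm⟫ / 2) (hsp : sp ≥ ⟪α, -nm⟫ / 2) :
    ∀ uhat : ℝ,
      -um * (⟪α, nm⟫ * uhat - β * ⟪qm, nm⟫ + sm * (um - uhat))
      - up * (⟪α, -nm⟫ * uhat - β * ⟪qp, -nm⟫ + sp * (up - uhat))
      + (1 / 2) * (⟪α, nm⟫ * um ^ 2 + ⟪α, -nm⟫ * up ^ 2)
      - (uhat - um) * (-β * ⟪qm, nm⟫)
      - (uhat - up) * (-β * ⟪qp, -nm⟫)
      + uhat * (⟪α, nm⟫ * uhat - β * ⟪qm, nm⟫ + sm * (um - uhat))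
      + uhat * (⟪α, -nm⟫ * uhat - β * ⟪qp, -nm⟫ + sp * (up - uhat))
      ≤ 0 :=
  stmt_5_general d nm α β um up qm qp sm sp hsm hsp
end

section
/- Assume a = α·n₋ ≠ 0 and take the upwind-type stabilization s₋ = s₊ = λ|a| with λ ∈ ℝ. Let σ = a/|a| and ζ₋ = 2λ − σ, ζ₊ = 2λ + σ. Then s₋ − (α·n₋)/2 = (|a|/2)ζ₋ and s₊ − (α·n₊)/2 = (|a|/2)ζ₊, and the quadratic form ζ₋(u₋ − û)² + ζ₊(u₊ − û)² is nonnegative for all real values u₋, u₊, û if and only if λ ≥ 1/2. -/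
open RealInnerProductSpace

lemma abs_div_abs_self {K : Type*} [Field K] [LinearOrder K] [IsStrictOrderedRing K]
    {a : K} (ha : a ≠ 0) : |(a / |a|)| = 1 := by
  rw [abs_div, abs_abs, div_self (abs_ne_zero.mpr ha)]

lemma forall_nonneg_weighted_sq_add_sq_iff {K : Type*} [Field K] [LinearOrder K]
    [IsStrictOrderedRing K] (p q : K) :
    (∀ x y z : K, 0 ≤ p * (x - z) ^ 2 + q * (y - z) ^ 2) ↔ 0 ≤ p ∧ 0 ≤ q := by
  refine ⟨fun h => ⟨by simpa using h 1 0 0, by simpa using h 0 1 0⟩, ?_⟩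
  rintro ⟨hp, hq⟩ x y z
  positivity

lemma sub_nonneg_and_add_nonneg_iff_abs_le {K : Type*} [AddCommGroup K] [LinearOrder K]
    [IsOrderedAddMonoid K] (c σ : K) : 0 ≤ c - σ ∧ 0 ≤ c + σ ↔ |σ| ≤ c := by
  rw [abs_le, sub_nonneg, ← neg_le_iff_add_nonneg, neg_le, and_comm]

theorem stmt_6_general (d : ℕ)
    (nm : EuclideanSpace ℝ (Fin d))
    (α : EuclideanSpace ℝ (Fin d)) (ha : ⟪α, nm⟫ ≠ 0)
    (lam : ℝ) (sm sp : ℝ)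
    (hsm : sm = lam * |⟪α, nm⟫|) (hsp : sp = lam * |⟪α, nm⟫|)
    (σ ζm ζp : ℝ) (hσ : σ = ⟪α, nm⟫ / |⟪α, nm⟫|)
    (hζm : ζm = 2 * lam - σ) (hζp : ζp = 2 * lam + σ) :
    sm - ⟪α, nm⟫ / 2 = (|⟪α, nm⟫| / 2) * ζm
    ∧ sp - ⟪α, -nm⟫ / 2 = (|⟪α, nm⟫| / 2) * ζp
    ∧ ((∀ um up uhat : ℝ,
          0 ≤ ζm * (um - uhat) ^ 2 + ζp * (up - uhat) ^ 2) ↔ lam ≥ 1 / 2) := by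
  subst hsm hsp hζm hζp hσ
  have hsign : |⟪α, nm⟫| * (⟪α, nm⟫ / |⟪α, nm⟫|) = ⟪α, nm⟫ :=
    mul_div_cancel₀ _ (abs_ne_zero.mpr ha)
  refine ⟨by linear_combination (1 / 2 : ℝ) * hsign, ?_, ?_⟩
  · rw [inner_neg_right]
    linear_combination (-1 / 2 : ℝ) * hsign
  · rw [forall_nonneg_weighted_sq_add_sq_iff, sub_nonneg_and_add_nonneg_iff_abs_le,
      abs_div_abs_self ha]
    constructor <;> intro h <;> linarith

/-- Upwind-type stabilization `s₋ = s₊ = λ|a|` with `a = α·n₋ ≠ 0`, `σ = a/|a|`,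
`ζ₋ = 2λ − σ`, `ζ₊ = 2λ + σ`: then `s₋ − a/2 = (|a|/2)ζ₋`,
`s₊ − (α·n₊)/2 = (|a|/2)ζ₊`, and `ζ₋(u₋−û)² + ζ₊(u₊−û)² ≥ 0` for all reals
iff `λ ≥ 1/2`. -/
theorem stmt_6 (d : ℕ) (hd : 1 ≤ d)
    (nm : EuclideanSpace ℝ (Fin d)) (hn : ‖nm‖ = 1)
    (α : EuclideanSpace ℝ (Fin d)) (ha : ⟪α, nm⟫ ≠ 0)
    (lam : ℝ) (sm sp : ℝ)
    (hsm : sm = lam * |⟪α, nm⟫|) (hsp : sp = lam * |⟪α, nm⟫|)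
    (σ ζm ζp : ℝ) (hσ : σ = ⟪α, nm⟫ / |⟪α, nm⟫|)
    (hζm : ζm = 2 * lam - σ) (hζp : ζp = 2 * lam + σ) :
    sm - ⟪α, nm⟫ / 2 = (|⟪α, nm⟫| / 2) * ζm
    ∧ sp - ⟪α, -nm⟫ / 2 = (|⟪α, nm⟫| / 2) * ζp
    ∧ ((∀ um up uhat : ℝ,
          0 ≤ ζm * (um - uhat) ^ 2 + ζp * (up - uhat) ^ 2) ↔ lam ≥ 1 / 2) :=
  stmt_6_general d nm α ha lam sm sp hsm hsp σ ζm ζp hσ hζm hζp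
end

section
/- For pure advection (β = 0) with a = α·n₋ ≠ 0, λ > 0, and s₋ = s₊ = λ|a|, let û be the unique solution of the transmission condition F̂₋(û) + F̂₊(û) = 0. Then the face energy term reduces to the standard FR upwind dissipation: (s₋ − a/2)(u₋ − û)² + (s₊ + a/2)(u₊ − û)² = (λ/2)|a|(u₋ − u₊)². -/
open RealInnerProductSpace

/-
With `β = 0` the advective parts `a û` and `-a û` of the two one-sided fluxes cancel, so the
transmission condition reads `s ((u₋ - û) + (u₊ - û)) = 0`, and `s ≠ 0` forces `û` to be the
average of `u₋` and `u₊`. At the average both jumps equal `±(u₋ - u₊)/2`, the `∓ a/2` terms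
cancel, and the face energy is `s (u₋ - u₊)² / 2`.
-/

lemma trace_eq_average_of_transmission {a s um up uhat : ℝ} (hs : s ≠ 0)
    (h : a * uhat + s * (um - uhat) + (-a * uhat + s * (up - uhat)) = 0) :
    uhat = (um + up) / 2 := by
  have hsum : s * (um + up - 2 * uhat) = 0 := by linear_combination h
  have := (mul_eq_zero.mp hsum).resolve_left hs
  linarith

lemma face_energy_at_average (a s um up : ℝ) :
    (s - a / 2) * (um - (um + up) / 2) ^ 2 + (s + a / 2) * (up - (um + up) / 2) ^ 2
      = s / 2 * (um - up) ^ 2 := by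
  ring

theorem stmt_7_general (d : ℕ)
    (nm : EuclideanSpace ℝ (Fin d))
    (α : EuclideanSpace ℝ (Fin d)) (β : ℝ) (hβ : β = 0)
    (ha : ⟪α, nm⟫ ≠ 0) (lam : ℝ) (hlam : 0 < lam) (sm sp : ℝ)
    (hsm : sm = lam * |⟪α, nm⟫|) (hsp : sp = lam * |⟪α, nm⟫|)
    (um up : ℝ) (qm qp : EuclideanSpace ℝ (Fin d)) (uhat : ℝ)
    (htrans :
      (⟪α, nm⟫ * uhat - β * ⟪qm, nm⟫ + sm * (um - uhat)) +
      (⟪α, -nm⟫ * uhat - β * ⟪qp, -nm⟫ + sp * (up - uhat)) = 0) :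
    (sm - ⟪α, nm⟫ / 2) * (um - uhat) ^ 2 + (sp + ⟪α, nm⟫ / 2) * (up - uhat) ^ 2
      = (lam / 2) * |⟪α, nm⟫| * (um - up) ^ 2 := by
  subst hβ hsm hsp
  rw [inner_neg_right] at htrans
  have hs : lam * |⟪α, nm⟫| ≠ 0 := by positivity
  rw [trace_eq_average_of_transmission (a := ⟪α, nm⟫) (um := um) (up := up) (uhat := uhat) hs
    (by linear_combination htrans), face_energy_at_average]
  ring

/-- Pure advection (`β = 0`), `a = α·n₋ ≠ 0`, `λ > 0`, `s₋ = s₊ = λ|a|`, and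
`uhat` the solution of the transmission condition: the face energy term reduces
to the standard FR upwind dissipation `(λ/2)|a|(u₋ − u₊)²`. -/
theorem stmt_7 (d : ℕ) (hd : 1 ≤ d)
    (nm : EuclideanSpace ℝ (Fin d)) (hn : ‖nm‖ = 1)
    (α : EuclideanSpace ℝ (Fin d)) (β : ℝ) (hβ : β = 0)
    (ha : ⟪α, nm⟫ ≠ 0) (lam : ℝ) (hlam : 0 < lam) (sm sp : ℝ)
    (hsm : sm = lam * |⟪α, nm⟫|) (hsp : sp = lam * |⟪α, nm⟫|)
    (um up : ℝ) (qm qp : EuclideanSpace ℝ (Fin d)) (uhat : ℝ)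
    (htrans :
      (⟪α, nm⟫ * uhat - β * ⟪qm, nm⟫ + sm * (um - uhat)) +
      (⟪α, -nm⟫ * uhat - β * ⟪qp, -nm⟫ + sp * (up - uhat)) = 0) :
    (sm - ⟪α, nm⟫ / 2) * (um - uhat) ^ 2 + (sp + ⟪α, nm⟫ / 2) * (up - uhat) ^ 2
      = (lam / 2) * |⟪α, nm⟫| * (um - up) ^ 2 :=
  stmt_7_general d nm α β hβ ha lam hlam sm sp hsm hsp um up qm qp uhat htrans
end

section
/- For pure advection (β = 0), let a = α·n₋ ≠ 0, σ = a/|a|, and let γ > 0 with γ ∉ [1/2, 1]. Define the one-sided stabilization parameters s₋ = γ|a| + a and s₊ = (γσ/(2γ + σ))|a| − a. Then s₋ + s₊ ≠ 0, and the unique trace û solving the transmission condition F̂₋(û) + F̂₊(û) = 0 is û = (1 + σ/(2γ))·u₋ − (σ/(2γ))·u₊. -/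
/-!
With `β = 0` the transmission condition reads `(s₋ + s₊) û = s₋ u₋ + s₊ u₊`. Writing `a = σ|a|`
with `σ² = 1`, the two parameters are `s₋ = a(γσ + 1)` and `s₊ = -a(γ + σ)/(2γ + σ)`, so
`s₋ + s₊ = 2aγ(γσ + 1)/(2γ + σ)`, which vanishes only at `γ = 1/2` or `γ = 1` (for `σ = -1`).
The choice of `s₊` is exactly what makes `2γ s₊ + σ (s₋ + s₊) = 0`, i.e. `s₊/(s₋ + s₊) = -σ/(2γ)`,
and this weight is the coefficient of `u₊` in the trace.
-/

open RealInnerProductSpace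

section Flux

variable {E : Type*} [NormedAddCommGroup E] [InnerProductSpace ℝ E]

def numFlux (α n q : E) (β s u uhat : ℝ) : ℝ :=
  ⟪α, n⟫ * uhat - β * ⟪q, n⟫ + s * (u - uhat)

theorem numFlux_add_numFlux_neg_eq_zero_iff (α n qm qp : E) (β sm sp um up uhat : ℝ) :
    numFlux α n qm β sm um uhat + numFlux α (-n) qp β sp up uhat = 0 ↔
      (sm + sp) * uhat = sm * um + sp * up - β * ⟪qm - qp, n⟫ := by
  simp only [numFlux, inner_neg_right, inner_sub_left]
  constructor <;> intro h <;> linarith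

end Flux

theorem abs_eq_div_abs_mul_self (a : ℝ) : |a| = a / |a| * a := by
  rw [div_mul_eq_mul_div, ← abs_mul_self a, abs_mul, mul_self_div_self]

theorem div_abs_mul_self_eq_one {a : ℝ} (ha : a ≠ 0) : a / |a| * (a / |a|) = 1 := by
  have h : |a| * |a| ≠ 0 := mul_ne_zero (abs_ne_zero.2 ha) (abs_ne_zero.2 ha)
  rw [div_mul_div_comm, ← abs_mul_abs_self a, div_self h]

section Stabilization

variable {a σ γ : ℝ}

theorem two_mul_add_ne_zero_and_mul_add_one_ne_zero (hσ : σ * σ = 1) (hγ : 0 < γ)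
    (hγ' : γ ∉ Set.Icc (1 / 2 : ℝ) 1) : 2 * γ + σ ≠ 0 ∧ γ * σ + 1 ≠ 0 := by
  rcases mul_self_eq_one_iff.1 hσ with rfl | rfl
  · constructor <;> intro h <;> linarith
  · simp only [Set.mem_Icc, not_and_or, not_le] at hγ'
    constructor <;> intro h <;> rcases hγ' with h' | h' <;> linarith

theorem stabilization_minus_eq (habs : |a| = σ * a) : γ * |a| + a = a * (γ * σ + 1) := by
  rw [habs]
  ring

theorem stabilization_plus_eq (habs : |a| = σ * a) (hσ : σ * σ = 1) (hden : 2 * γ + σ ≠ 0) :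
    (γ * σ / (2 * γ + σ)) * |a| - a = -(a * (γ + σ)) / (2 * γ + σ) := by
  rw [habs, eq_div_iff hden, sub_mul, div_mul_eq_mul_div, div_mul_cancel₀ _ hden]
  linear_combination (γ * a) * hσ

theorem stabilization_sum_eq (hσ : σ * σ = 1) (hden : 2 * γ + σ ≠ 0) :
    a * (γ * σ + 1) + -(a * (γ + σ)) / (2 * γ + σ) = 2 * a * γ * (γ * σ + 1) / (2 * γ + σ) := by
  rw [eq_div_iff hden, add_mul, div_mul_cancel₀ _ hden]
  linear_combination (a * γ) * hσ

theorem two_mul_stabilization_plus_add_sign_mul_sum (hσ : σ * σ = 1) (hden : 2 * γ + σ ≠ 0) :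
    2 * γ * (-(a * (γ + σ)) / (2 * γ + σ)) + σ * (2 * a * γ * (γ * σ + 1) / (2 * γ + σ)) = 0 := by
  field_simp
  linear_combination (2 * a * γ * γ) * hσ

end Stabilization

theorem eq_of_mul_eq_of_two_mul_add_mul_eq_zero {sm sp σ γ um up uhat : ℝ}
    (hS : sm + sp ≠ 0) (hγ : γ ≠ 0) (hdesign : 2 * γ * sp + σ * (sm + sp) = 0)
    (h : (sm + sp) * uhat = sm * um + sp * up) :
    uhat = (1 + σ / (2 * γ)) * um - (σ / (2 * γ)) * up := by
  refine mul_left_cancel₀ hS (h.trans ?_)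
  field_simp
  linear_combination (up - um) * hdesign

theorem stmt_8_general (d : ℕ)
    (nm : EuclideanSpace ℝ (Fin d))
    (α : EuclideanSpace ℝ (Fin d)) (β : ℝ) (hβ : β = 0)
    (ha : ⟪α, nm⟫ ≠ 0) (σ : ℝ) (hσ : σ = ⟪α, nm⟫ / |⟪α, nm⟫|)
    (γ : ℝ) (hγ : 0 < γ) (hγ' : γ ∉ Set.Icc (1 / 2 : ℝ) 1)
    (sm sp : ℝ)
    (hsm : sm = γ * |⟪α, nm⟫| + ⟪α, nm⟫)
    (hsp : sp = (γ * σ / (2 * γ + σ)) * |⟪α, nm⟫| - ⟪α, nm⟫)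
    (um up : ℝ) (qm qp : EuclideanSpace ℝ (Fin d)) :
    sm + sp ≠ 0
    ∧ ∀ uhat : ℝ,
        (⟪α, nm⟫ * uhat - β * ⟪qm, nm⟫ + sm * (um - uhat)) +
        (⟪α, -nm⟫ * uhat - β * ⟪qp, -nm⟫ + sp * (up - uhat)) = 0 →
        uhat = (1 + σ / (2 * γ)) * um - (σ / (2 * γ)) * up := by
  have habs : |⟪α, nm⟫| = σ * ⟪α, nm⟫ := hσ ▸ abs_eq_div_abs_mul_self _
  have hσσ : σ * σ = 1 := hσ ▸ div_abs_mul_self_eq_one ha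
  obtain ⟨hden, hfac⟩ := two_mul_add_ne_zero_and_mul_add_one_ne_zero hσσ hγ hγ'
  rw [stabilization_minus_eq habs] at hsm
  rw [stabilization_plus_eq habs hσσ hden] at hsp
  have hsum : sm + sp = 2 * ⟪α, nm⟫ * γ * (γ * σ + 1) / (2 * γ + σ) := by
    rw [hsm, hsp, stabilization_sum_eq hσσ hden]
  have hS : sm + sp ≠ 0 := by
    rw [hsum]
    exact div_ne_zero (mul_ne_zero (mul_ne_zero (mul_ne_zero two_ne_zero ha) hγ.ne') hfac) hden
  refine ⟨hS, fun uhat htrans => ?_⟩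
  have hsolve : (sm + sp) * uhat = sm * um + sp * up := by
    simpa [hβ] using (numFlux_add_numFlux_neg_eq_zero_iff α nm qm qp β sm sp um up uhat).1 htrans
  have hdesign : 2 * γ * sp + σ * (sm + sp) = 0 := by
    rw [hsum, hsp]
    exact two_mul_stabilization_plus_add_sign_mul_sum hσσ hden
  exact eq_of_mul_eq_of_two_mul_add_mul_eq_zero hS hγ.ne' hdesign hsolve

/-- Pure advection (`β = 0`), `a = α·n₋ ≠ 0`, `σ = a/|a|`, `γ > 0`, `γ ∉ [1/2,1]`,
with one-sided stabilization `s₋ = γ|a| + a`, `s₊ = (γσ/(2γ+σ))|a| − a`: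
then `s₋ + s₊ ≠ 0` and the unique trace solving the transmission condition is
`uhat = (1 + σ/(2γ))u₋ − (σ/(2γ))u₊`. -/
theorem stmt_8 (d : ℕ) (hd : 1 ≤ d)
    (nm : EuclideanSpace ℝ (Fin d)) (hn : ‖nm‖ = 1)
    (α : EuclideanSpace ℝ (Fin d)) (β : ℝ) (hβ : β = 0)
    (ha : ⟪α, nm⟫ ≠ 0) (σ : ℝ) (hσ : σ = ⟪α, nm⟫ / |⟪α, nm⟫|)
    (γ : ℝ) (hγ : 0 < γ) (hγ' : γ ∉ Set.Icc (1 / 2 : ℝ) 1)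
    (sm sp : ℝ)
    (hsm : sm = γ * |⟪α, nm⟫| + ⟪α, nm⟫)
    (hsp : sp = (γ * σ / (2 * γ + σ)) * |⟪α, nm⟫| - ⟪α, nm⟫)
    (um up : ℝ) (qm qp : EuclideanSpace ℝ (Fin d)) :
    sm + sp ≠ 0
    ∧ ∀ uhat : ℝ,
        (⟪α, nm⟫ * uhat - β * ⟪qm, nm⟫ + sm * (um - uhat)) +
        (⟪α, -nm⟫ * uhat - β * ⟪qp, -nm⟫ + sp * (up - uhat)) = 0 →
        uhat = (1 + σ / (2 * γ)) * um - (σ / (2 * γ)) * up :=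
  stmt_8_general d nm α β hβ ha σ hσ γ hγ hγ' sm sp hsm hsp um up qm qp
end

section
/- For pure advection (β = 0), let a = α·n₋ ≠ 0, σ = a/|a|, and let γ > 0 with γ ∉ [1/2, 1]. With the one-sided stabilization parameters s₋ = γ|a| + a and s₊ = (γσ/(2γ + σ))|a| − a, and û the unique solution of the transmission condition F̂₋(û) + F̂₊(û) = 0, the common normal flux is exactly the central flux: F̂₋(û) = a·(u₋ + u₊)/2. Hence this choice of stabilization recovers the exact central FR scheme for pure advection via HFR. -/
open RealInnerProductSpace

/-! With `σ² = 1` and `|a| = σ a`, the stabilizations are `s₋ = a (1 + γσ)` and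
`s₊ = -σ s₋ / (2γ + σ)`. Once `s₋ ≠ 0` is cancelled, the transmission condition says
`2γσ (u₋ - û) = u₊ - u₋`, so the stabilization term `γσ a (u₋ - û)` of `F̂₋(û) - a u₋`
is exactly half the jump `a (u₊ - u₋)`. The restriction `γ ∉ [1/2, 1]` excludes the
values at which `s₋` vanishes or `s₊` has a zero denominator when `a < 0`. -/

section SignOfNonzero

variable {K : Type*} [Field K] [LinearOrder K] [IsStrictOrderedRing K]

lemma div_abs_self_eq_one_or_neg_one {a : K} (ha : a ≠ 0) : a / |a| = 1 ∨ a / |a| = -1 := by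
  rcases ha.lt_or_gt with h | h
  · right
    rw [abs_of_neg h, div_neg, div_self ha]
  · left
    rw [abs_of_pos h, div_self ha]

lemma abs_eq_div_abs_self_mul (a : K) : |a| = a / |a| * a := by
  rcases eq_or_ne a 0 with rfl | ha
  · simp
  · rw [div_mul_eq_mul_div, ← abs_mul_abs_self, mul_div_cancel_right₀ _ (abs_ne_zero.mpr ha)]

end SignOfNonzero

lemma one_add_mul_ne_zero_and_two_mul_add_ne_zero {γ σ : ℝ} (hγ : 0 < γ)
    (hγ' : γ ∉ Set.Icc (1 / 2 : ℝ) 1) (hσ : σ = 1 ∨ σ = -1) :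
    1 + γ * σ ≠ 0 ∧ 2 * γ + σ ≠ 0 := by
  rcases hσ with rfl | rfl <;>
    exact ⟨fun h => hγ' ⟨by linarith, by linarith⟩, fun h => hγ' ⟨by linarith, by linarith⟩⟩

theorem central_flux_of_transmission {a σ γ sm sp um up uhat : ℝ} (hσ : σ * σ = 1)
    (hsm_ne : sm ≠ 0) (h2 : 2 * γ + σ ≠ 0)
    (hsm : sm = a * (1 + γ * σ)) (hsp : sp = -(σ * sm) / (2 * γ + σ))
    (htrans : sm * (um - uhat) + sp * (up - uhat) = 0) :
    a * uhat + sm * (um - uhat) = a * (um + up) / 2 := by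
  have hsp' : sp * (2 * γ + σ) = -(σ * sm) := by rw [hsp, div_mul_cancel₀ _ h2]
  have hbalance : (2 * γ + σ) * (um - uhat) = σ * (up - uhat) := by
    have h : sm * ((2 * γ + σ) * (um - uhat) - σ * (up - uhat)) = 0 := by
      linear_combination (2 * γ + σ) * htrans - (up - uhat) * hsp'
    exact sub_eq_zero.mp ((mul_eq_zero.mp h).resolve_left hsm_ne)
  have hjump : 2 * γ * σ * (um - uhat) = up - um := by
    linear_combination σ * hbalance + (up - um) * hσ
  linear_combination (a / 2) * hjump + (um - uhat) * hsm

theorem stmt_9_general (d : ℕ)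
    (nm : EuclideanSpace ℝ (Fin d))
    (α : EuclideanSpace ℝ (Fin d)) (β : ℝ) (hβ : β = 0)
    (ha : ⟪α, nm⟫ ≠ 0) (σ : ℝ) (hσ : σ = ⟪α, nm⟫ / |⟪α, nm⟫|)
    (γ : ℝ) (hγ : 0 < γ) (hγ' : γ ∉ Set.Icc (1 / 2 : ℝ) 1)
    (sm sp : ℝ)
    (hsm : sm = γ * |⟪α, nm⟫| + ⟪α, nm⟫)
    (hsp : sp = (γ * σ / (2 * γ + σ)) * |⟪α, nm⟫| - ⟪α, nm⟫)
    (um up : ℝ) (qm qp : EuclideanSpace ℝ (Fin d)) (uhat : ℝ)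
    (htrans :
      (⟪α, nm⟫ * uhat - β * ⟪qm, nm⟫ + sm * (um - uhat)) +
      (⟪α, -nm⟫ * uhat - β * ⟪qp, -nm⟫ + sp * (up - uhat)) = 0) :
    ⟪α, nm⟫ * uhat - β * ⟪qm, nm⟫ + sm * (um - uhat)
      = ⟪α, nm⟫ * (um + up) / 2 := by
  subst hβ
  rw [inner_neg_right] at htrans
  set a := ⟪α, nm⟫
  have hσ_sign : σ = 1 ∨ σ = -1 := hσ ▸ div_abs_self_eq_one_or_neg_one ha
  have hσσ : σ * σ = 1 := by rcases hσ_sign with rfl | rfl <;> norm_num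
  have habs : |a| = σ * a := hσ ▸ abs_eq_div_abs_self_mul a
  obtain ⟨hk, h2⟩ := one_add_mul_ne_zero_and_two_mul_add_ne_zero hγ hγ' hσ_sign
  have hsm' : sm = a * (1 + γ * σ) := by rw [hsm, habs]; ring
  have hsp' : sp = -(σ * sm) / (2 * γ + σ) := by
    rw [hsp, habs, hsm', eq_div_iff h2, sub_mul, mul_right_comm _ (σ * a), div_mul_cancel₀ _ h2]
    linear_combination 2 * γ * a * hσσ
  rw [zero_mul, sub_zero]
  exact central_flux_of_transmission hσσ (hsm' ▸ mul_ne_zero ha hk) h2 hsm' hsp'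
    (by linear_combination htrans)

/-- Pure advection (`β = 0`), `a = α·n₋ ≠ 0`, `σ = a/|a|`, `γ > 0`, `γ ∉ [1/2,1]`,
with one-sided stabilization `s₋ = γ|a| + a`, `s₊ = (γσ/(2γ+σ))|a| − a`, and `uhat`
the solution of the transmission condition: the common normal flux is the central
flux `F̂₋(uhat) = a(u₋+u₊)/2`. -/
theorem stmt_9 (d : ℕ) (hd : 1 ≤ d)
    (nm : EuclideanSpace ℝ (Fin d)) (hn : ‖nm‖ = 1)
    (α : EuclideanSpace ℝ (Fin d)) (β : ℝ) (hβ : β = 0)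
    (ha : ⟪α, nm⟫ ≠ 0) (σ : ℝ) (hσ : σ = ⟪α, nm⟫ / |⟪α, nm⟫|)
    (γ : ℝ) (hγ : 0 < γ) (hγ' : γ ∉ Set.Icc (1 / 2 : ℝ) 1)
    (sm sp : ℝ)
    (hsm : sm = γ * |⟪α, nm⟫| + ⟪α, nm⟫)
    (hsp : sp = (γ * σ / (2 * γ + σ)) * |⟪α, nm⟫| - ⟪α, nm⟫)
    (um up : ℝ) (qm qp : EuclideanSpace ℝ (Fin d)) (uhat : ℝ)
    (htrans :
      (⟪α, nm⟫ * uhat - β * ⟪qm, nm⟫ + sm * (um - uhat)) +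
      (⟪α, -nm⟫ * uhat - β * ⟪qp, -nm⟫ + sp * (up - uhat)) = 0) :
    ⟪α, nm⟫ * uhat - β * ⟪qm, nm⟫ + sm * (um - uhat)
      = ⟪α, nm⟫ * (um + up) / 2 :=
  stmt_9_general d nm α β hβ ha σ hσ γ hγ hγ' sm sp hsm hsp um up qm qp uhat htrans
end

section
/- Assume s₋ + s₊ ≠ 0 and let û be the unique solution of the transmission condition F̂₋(û) + F̂₊(û) = 0. Then û admits the LDG-H decomposition û = {{u}} − ζ⟦u⟧ − βθ⟦q⟧, where {{u}} = (u₋ + u₊)/2, ⟦u⟧ = u₋ − u₊, ⟦q⟧ = q₋·n₋ + q₊·n₊, ζ = (s₊ − s₋)/(2(s₋ + s₊)), and θ = 1/(2{{s}}) = 1/(s₋ + s₊). Moreover θ ≠ 0 for every finite choice of the stabilization parameters; hence for diffusion problems (β ≠ 0) the HFR numerical trace never coincides with the LDG trace form {{u}} − ζ⟦u⟧ (which has θ = 0) when ⟦q⟧ ≠ 0. -/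
open RealInnerProductSpace

/-
Since n₊ = −n₋, the advective parts of the two one-sided fluxes cancel and the transmission
condition is linear in û with coefficient −(s₋ + s₊); its solution is the s-weighted mean of
u₋, u₊ shifted by −β⟦q⟧/(s₋ + s₊). The weighted mean rewrites as {{u}} − ζ⟦u⟧, and θ = 1/(s₋ + s₊)
never vanishes, so the diffusive correction −βθ⟦q⟧ is present whenever β ≠ 0 and ⟦q⟧ ≠ 0.
-/

/-- The one-sided numerical normal flux `(α·n) û − β (q·n) + s (u − û)`, written in terms of the
normal velocity `a = α·n` and the normal gradient `qn = q·n`. -/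
def hfrNormalFlux {K : Type*} [Field K] (a β qn s u uhat : K) : K :=
  a * uhat - β * qn + s * (u - uhat)

theorem eq_div_of_hfrNormalFlux_add_eq_zero {K : Type*} [Field K]
    {a β qm qp sm sp um up uhat : K} (hs : sm + sp ≠ 0)
    (h : hfrNormalFlux a β qm sm um uhat + hfrNormalFlux (-a) β qp sp up uhat = 0) :
    uhat = (sm * um + sp * up - β * (qm + qp)) / (sm + sp) := by
  rw [eq_div_iff hs]
  unfold hfrNormalFlux at h
  linear_combination -h

theorem weighted_mean_eq_mean_sub_jump {K : Type*} [Field K] [NeZero (2 : K)]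
    {sm sp um up : K} (hs : sm + sp ≠ 0) :
    (sm * um + sp * up) / (sm + sp) = (um + up) / 2 - (sp - sm) / (2 * (sm + sp)) * (um - up) := by
  field_simp
  ring

theorem stmt_10_general (d : ℕ)
    (nm : EuclideanSpace ℝ (Fin d))
    (α : EuclideanSpace ℝ (Fin d)) (β : ℝ)
    (um up : ℝ) (qm qp : EuclideanSpace ℝ (Fin d)) (sm sp : ℝ)
    (hs : sm + sp ≠ 0) (uhat : ℝ)
    (htrans :
      (⟪α, nm⟫ * uhat - β * ⟪qm, nm⟫ + sm * (um - uhat)) +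
      (⟪α, -nm⟫ * uhat - β * ⟪qp, -nm⟫ + sp * (up - uhat)) = 0)
    (ζ θ : ℝ) (hζ : ζ = (sp - sm) / (2 * (sm + sp))) (hθ : θ = 1 / (sm + sp)) :
    uhat = (um + up) / 2 - ζ * (um - up) - β * θ * (⟪qm, nm⟫ + ⟪qp, -nm⟫)
    ∧ θ ≠ 0
    ∧ (β ≠ 0 → ⟪qm, nm⟫ + ⟪qp, -nm⟫ ≠ 0 →
        uhat ≠ (um + up) / 2 - ζ * (um - up)) := by
  have htrans' : hfrNormalFlux ⟪α, nm⟫ β ⟪qm, nm⟫ sm um uhat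
      + hfrNormalFlux (-⟪α, nm⟫) β ⟪qp, -nm⟫ sp up uhat = 0 := by
    rwa [← inner_neg_right]
  have hdecomp : uhat = (um + up) / 2 - ζ * (um - up) - β * θ * (⟪qm, nm⟫ + ⟪qp, -nm⟫) := by
    rw [eq_div_of_hfrNormalFlux_add_eq_zero hs htrans', sub_div,
      weighted_mean_eq_mean_sub_jump hs, hζ, hθ]
    ring
  have hθ0 : θ ≠ 0 := hθ ▸ one_div_ne_zero hs
  refine ⟨hdecomp, hθ0, fun hβ hq => ?_⟩
  rw [hdecomp, Ne, sub_eq_self]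
  exact mul_ne_zero (mul_ne_zero hβ hθ0) hq

/-- LDG-H decomposition of the HFR trace: with `s₋ + s₊ ≠ 0` and `uhat` the
solution of the transmission condition, `uhat = {{u}} − ζ⟦u⟧ − βθ⟦q⟧` with
`ζ = (s₊ − s₋)/(2(s₋+s₊))` and `θ = 1/(s₋+s₊)`; moreover `θ ≠ 0`, so when
`β ≠ 0` and `⟦q⟧ ≠ 0` the HFR trace differs from the LDG form `{{u}} − ζ⟦u⟧`. -/
theorem stmt_10 (d : ℕ) (hd : 1 ≤ d)
    (nm : EuclideanSpace ℝ (Fin d)) (hn : ‖nm‖ = 1)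
    (α : EuclideanSpace ℝ (Fin d)) (β : ℝ)
    (um up : ℝ) (qm qp : EuclideanSpace ℝ (Fin d)) (sm sp : ℝ)
    (hs : sm + sp ≠ 0) (uhat : ℝ)
    (htrans :
      (⟪α, nm⟫ * uhat - β * ⟪qm, nm⟫ + sm * (um - uhat)) +
      (⟪α, -nm⟫ * uhat - β * ⟪qp, -nm⟫ + sp * (up - uhat)) = 0)
    (ζ θ : ℝ) (hζ : ζ = (sp - sm) / (2 * (sm + sp))) (hθ : θ = 1 / (sm + sp)) :
    uhat = (um + up) / 2 - ζ * (um - up) - β * θ * (⟪qm, nm⟫ + ⟪qp, -nm⟫)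
    ∧ θ ≠ 0
    ∧ (β ≠ 0 → ⟪qm, nm⟫ + ⟪qp, -nm⟫ ≠ 0 →
        uhat ≠ (um + up) / 2 - ζ * (um - up)) :=
  stmt_10_general d nm α β um up qm qp sm sp hs uhat htrans ζ θ hζ hθ
end

section
/- For pure diffusion (α = 0) with viscous stabilization s₋ = s₊ = τ, the pointwise face-energy contribution satisfies, for every û ∈ ℝ: −u₋·F̂₋(û) − u₊·F̂₊(û) − (û − u₋)(−β q₋·n₋) − (û − u₊)(−β q₊·n₊) + û·F̂₋(û) + û·F̂₊(û) = −τ[(u₋ − û)² + (u₊ − û)²], which is ≤ 0 whenever τ ≥ 0. Hence for pure diffusion the hybridized FR face terms are dissipative for any positive viscous stabilization τ > 0. -/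
/-!
On each side the viscous flux `v = -β q·n` enters the face energy only through
`(û - u)(F̂(û) - v)`, and `F̂(û) - v = s (u - û)`; so the gradients drop out and each side
contributes exactly `-s (u - û)²`.
-/

open RealInnerProductSpace

theorem face_energy_one_side_eq (v s u uhat : ℝ) :
    -u * (v + s * (u - uhat)) - (uhat - u) * v + uhat * (v + s * (u - uhat))
      = -s * (u - uhat) ^ 2 := by
  ring

theorem stmt_11_general (d : ℕ)
    (nm : EuclideanSpace ℝ (Fin d))
    (β : ℝ) (um up : ℝ) (qm qp : EuclideanSpace ℝ (Fin d)) (τ : ℝ) :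
    ∀ uhat : ℝ,
      (-um * (-β * ⟪qm, nm⟫ + τ * (um - uhat))
        - up * (-β * ⟪qp, -nm⟫ + τ * (up - uhat))
        - (uhat - um) * (-β * ⟪qm, nm⟫)
        - (uhat - up) * (-β * ⟪qp, -nm⟫)
        + uhat * (-β * ⟪qm, nm⟫ + τ * (um - uhat))
        + uhat * (-β * ⟪qp, -nm⟫ + τ * (up - uhat))
        = -τ * ((um - uhat) ^ 2 + (up - uhat) ^ 2))
      ∧ (0 ≤ τ →
          -um * (-β * ⟪qm, nm⟫ + τ * (um - uhat))
          - up * (-β * ⟪qp, -nm⟫ + τ * (up - uhat))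
          - (uhat - um) * (-β * ⟪qm, nm⟫)
          - (uhat - up) * (-β * ⟪qp, -nm⟫)
          + uhat * (-β * ⟪qm, nm⟫ + τ * (um - uhat))
          + uhat * (-β * ⟪qp, -nm⟫ + τ * (up - uhat)) ≤ 0) := by
  intro uhat
  have h_energy : -um * (-β * ⟪qm, nm⟫ + τ * (um - uhat))
      - up * (-β * ⟪qp, -nm⟫ + τ * (up - uhat))
      - (uhat - um) * (-β * ⟪qm, nm⟫)
      - (uhat - up) * (-β * ⟪qp, -nm⟫)
      + uhat * (-β * ⟪qm, nm⟫ + τ * (um - uhat))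
      + uhat * (-β * ⟪qp, -nm⟫ + τ * (up - uhat))
      = -τ * ((um - uhat) ^ 2 + (up - uhat) ^ 2) := by
    linear_combination face_energy_one_side_eq (-β * ⟪qm, nm⟫) τ um uhat
      + face_energy_one_side_eq (-β * ⟪qp, -nm⟫) τ up uhat
  refine ⟨h_energy, fun hτ => ?_⟩
  rw [h_energy]
  exact mul_nonpos_of_nonpos_of_nonneg (neg_nonpos.mpr hτ) (by positivity)

/-- Pure diffusion (`α = 0`) with `s₋ = s₊ = τ`: for every `uhat` the pointwise
face-energy contribution equals `−τ[(u₋−uhat)² + (u₊−uhat)²]`, which is `≤ 0`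
whenever `τ ≥ 0`. -/
theorem stmt_11 (d : ℕ) (hd : 1 ≤ d)
    (nm : EuclideanSpace ℝ (Fin d)) (hn : ‖nm‖ = 1)
    (β : ℝ) (um up : ℝ) (qm qp : EuclideanSpace ℝ (Fin d)) (τ : ℝ) :
    ∀ uhat : ℝ,
      (-um * (-β * ⟪qm, nm⟫ + τ * (um - uhat))
        - up * (-β * ⟪qp, -nm⟫ + τ * (up - uhat))
        - (uhat - um) * (-β * ⟪qm, nm⟫)
        - (uhat - up) * (-β * ⟪qp, -nm⟫)
        + uhat * (-β * ⟪qm, nm⟫ + τ * (um - uhat))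
        + uhat * (-β * ⟪qp, -nm⟫ + τ * (up - uhat))
        = -τ * ((um - uhat) ^ 2 + (up - uhat) ^ 2))
      ∧ (0 ≤ τ →
          -um * (-β * ⟪qm, nm⟫ + τ * (um - uhat))
          - up * (-β * ⟪qp, -nm⟫ + τ * (up - uhat))
          - (uhat - um) * (-β * ⟪qm, nm⟫)
          - (uhat - up) * (-β * ⟪qp, -nm⟫)
          + uhat * (-β * ⟪qm, nm⟫ + τ * (um - uhat))
          + uhat * (-β * ⟪qp, -nm⟫ + τ * (up - uhat)) ≤ 0) :=
  stmt_11_general d nm β um up qm qp τ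
end
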